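/- arXiv:1803.02453 — 4 statements merged into one kernel-verified Lean document; each statement's English description precedes it below -/
import Mathlib

section
/- (Approximate complementary slackness) If (Q̂, λ̂) is a ν-approximate saddle point of L(Q,λ) = err̂(Q) + Σ_k λ_k(γ̂_k(Q) − ĉ_k) over Δ × Λ with Λ = {λ ∈ ℝ_+^K : ‖λ‖₁ ≤ B}, then Σ_k λ̂_k(γ̂_k(Q̂) − ĉ_k) ≥ B·max_k (γ̂_k(Q̂) − ĉ_k)₊ − ν, where x₊ = max(x, 0). -/
/-!
Testing the saddle-point inequality in `λ` against `λ = 0` and against the vertices `B • eₖ`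
of `Λ` bounds every `B · (γ̂ₖ(Q̂) − ĉₖ)₊` by `∑ₖ λ̂ₖ (γ̂ₖ(Q̂) − ĉₖ) + ν`, because `err̂(Q̂)`
cancels; `B · max` is the supremum of these bounds.
-/

def nonnegL1Ball (K : Type*) [Fintype K] (B : ℝ) : Set (K → ℝ) :=
  {lam | (∀ k, 0 ≤ lam k) ∧ ∑ k, |lam k| ≤ B}

section nonnegL1Ball

variable {K : Type*} [Fintype K] {B : ℝ}

lemma zero_mem_nonnegL1Ball (hB : 0 ≤ B) : (0 : K → ℝ) ∈ nonnegL1Ball K B :=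
  ⟨fun _ => le_rfl, by simpa using hB⟩

lemma single_mem_nonnegL1Ball [DecidableEq K] (hB : 0 ≤ B) (k : K) :
    Pi.single k B ∈ nonnegL1Ball K B := by
  refine ⟨fun j => ?_, ?_⟩
  · rcases eq_or_ne j k with rfl | hjk <;> simp [*]
  · simp [Pi.single_apply, apply_ite, abs_of_nonneg hB]

lemma mul_iSup_max_zero_le_of_forall_mem_nonnegL1Ball (g : K → ℝ) {a : ℝ} (hB : 0 ≤ B)
    (h : ∀ lam ∈ nonnegL1Ball K B, ∑ k, lam k * g k ≤ a) :
    B * ⨆ k, max (g k) 0 ≤ a := by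
  classical
  have ha : 0 ≤ a := by simpa using h 0 (zero_mem_nonnegL1Ball hB)
  rw [Real.mul_iSup_of_nonneg hB]
  refine Real.iSup_le (fun k => ?_) ha
  rw [mul_max_of_nonneg _ _ hB, mul_zero]
  refine max_le ?_ ha
  simpa [Pi.single_apply] using h _ (single_mem_nonnegL1Ball hB k)

end nonnegL1Ball

theorem approximate_complementary_slackness_general
    (H K : Type) [Fintype H] [Fintype K]
    (err : (H → ℝ) → ℝ) (gam : (H → ℝ) → K → ℝ) (c : K → ℝ)
    (B ν : ℝ) (hB : 0 < B)
    (L : (H → ℝ) → (K → ℝ) → ℝ)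
    (hL : ∀ Q lam, L Q lam = err Q + ∑ k, lam k * (gam Q k - c k))
    (Λ : Set (K → ℝ)) (hΛ : Λ = {lam | (∀ k, 0 ≤ lam k) ∧ ∑ k, |lam k| ≤ B})
    (Qh : H → ℝ) (lamh : K → ℝ)
    (hsaddle2 : ∀ lam ∈ Λ, L Qh lam - ν ≤ L Qh lamh) :
    B * (⨆ k : K, max (gam Qh k - c k) 0) - ν ≤
      ∑ k, lamh k * (gam Qh k - c k) := by
  have hbound : ∀ lam ∈ nonnegL1Ball K B,
      ∑ k, lam k * (gam Qh k - c k) ≤ ∑ k, lamh k * (gam Qh k - c k) + ν := by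
    intro lam hlam
    have := hsaddle2 lam (hΛ ▸ hlam)
    rw [hL, hL] at this
    linarith
  linarith [mul_iSup_max_zero_le_of_forall_mem_nonnegL1Ball _ hB.le hbound]

/-- approximate complementary slackness: if `(Q̂, λ̂)` is a
ν-approximate saddle point of `L(Q,λ) = err̂(Q) + ∑_k λ_k (γ̂_k(Q) − ĉ_k)` over
`Δ × {λ ∈ ℝ₊^K : ‖λ‖₁ ≤ B}`, then
`∑_k λ̂_k (γ̂_k(Q̂) − ĉ_k) ≥ B·max_k (γ̂_k(Q̂) − ĉ_k)₊ − ν`. -/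
theorem approximate_complementary_slackness
    (H K : Type) [Fintype H] [Fintype K] [Nonempty K]
    (err : (H → ℝ) → ℝ) (gam : (H → ℝ) → K → ℝ) (c : K → ℝ)
    (B ν : ℝ) (hB : 0 < B) (hν : 0 ≤ ν)
    (L : (H → ℝ) → (K → ℝ) → ℝ)
    (hL : ∀ Q lam, L Q lam = err Q + ∑ k, lam k * (gam Q k - c k))
    (Δ : Set (H → ℝ)) (hΔ : Δ = stdSimplex ℝ H)
    (Λ : Set (K → ℝ)) (hΛ : Λ = {lam | (∀ k, 0 ≤ lam k) ∧ ∑ k, |lam k| ≤ B})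
    (Qh : H → ℝ) (lamh : K → ℝ) (hQh : Qh ∈ Δ) (hlamh : lamh ∈ Λ)
    (hsaddle1 : ∀ Q ∈ Δ, L Qh lamh ≤ L Q lamh + ν)
    (hsaddle2 : ∀ lam ∈ Λ, L Qh lam - ν ≤ L Qh lamh) :
    B * (⨆ k : K, max (gam Qh k - c k) 0) - ν ≤
      ∑ k, lamh k * (gam Qh k - c k) :=
  approximate_complementary_slackness_general H K err gam c B ν hB L hL Λ hΛ Qh lamh hsaddle2
end

section
/- (Empirical error bound) If (Q̂, λ̂) is a ν-approximate saddle point of the Lagrangian L(Q,λ) = err̂(Q) + λᵀ(γ̂(Q) − ĉ) over Δ × {λ ∈ ℝ_+^K : ‖λ‖₁ ≤ B}, then for any Q ∈ Δ satisfying the empirical fairness constraints γ̂(Q) ≤ ĉ componentwise, err̂(Q̂) ≤ err̂(Q) + 2ν. -/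
/-! Testing the λ-player's near-optimality against `λ = 0` gives `err̂(Q̂) - ν ≤ L(Q̂, λ̂)`, the
`Q`-player's against a feasible `Q` gives `L(Q̂, λ̂) ≤ L(Q, λ̂) + ν`, and `L(Q, λ̂) ≤ err̂(Q)` because
`λ̂ ≥ 0` and `γ̂(Q) - ĉ ≤ 0`. -/

theorem Finset.sum_mul_sub_nonpos {ι : Type*} (s : Finset ι) {lam g c : ι → ℝ}
    (hlam : ∀ k, 0 ≤ lam k) (hg : ∀ k, g k ≤ c k) :
    ∑ k ∈ s, lam k * (g k - c k) ≤ 0 :=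
  Finset.sum_nonpos fun k _ => mul_nonpos_of_nonneg_of_nonpos (hlam k) (sub_nonpos.2 (hg k))

theorem empirical_error_bound_general
    (H K : Type) [Fintype K]
    (err : (H → ℝ) → ℝ) (gam : (H → ℝ) → K → ℝ) (c : K → ℝ)
    (B ν : ℝ) (hB : 0 < B)
    (L : (H → ℝ) → (K → ℝ) → ℝ)
    (hL : ∀ Q lam, L Q lam = err Q + ∑ k, lam k * (gam Q k - c k))
    (Δ : Set (H → ℝ))
    (Λ : Set (K → ℝ)) (hΛ : Λ = {lam | (∀ k, 0 ≤ lam k) ∧ ∑ k, |lam k| ≤ B})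
    (Qh : H → ℝ) (lamh : K → ℝ) (hlamh : lamh ∈ Λ)
    (hsaddle1 : ∀ Q ∈ Δ, L Qh lamh ≤ L Q lamh + ν)
    (hsaddle2 : ∀ lam ∈ Λ, L Qh lam - ν ≤ L Qh lamh)
    (Q : H → ℝ) (hQ : Q ∈ Δ) (hfeas : ∀ k, gam Q k ≤ c k) :
    err Qh ≤ err Q + 2 * ν := by
  subst hΛ
  have hzero_mem : (0 : K → ℝ) ∈ {lam | (∀ k, 0 ≤ lam k) ∧ ∑ k, |lam k| ≤ B} :=
    ⟨fun _ => le_rfl, by simpa using hB.le⟩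
  have hL_zero : L Qh 0 = err Qh := by simp [hL]
  have hL_feas : L Q lamh ≤ err Q := by
    rw [hL]
    linarith [Finset.univ.sum_mul_sub_nonpos hlamh.1 hfeas]
  linarith [hsaddle1 Q hQ, hsaddle2 0 hzero_mem]

/-- empirical error bound: if `(Q̂, λ̂)` is a ν-approximate saddle
point of the Lagrangian, then `err̂(Q̂) ≤ err̂(Q) + 2ν` for any `Q ∈ Δ` with
`γ̂(Q) ≤ ĉ` componentwise. -/
theorem empirical_error_bound
    (H K : Type) [Fintype H] [Fintype K]
    (err : (H → ℝ) → ℝ) (gam : (H → ℝ) → K → ℝ) (c : K → ℝ)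
    (B ν : ℝ) (hB : 0 < B) (hν : 0 ≤ ν)
    (L : (H → ℝ) → (K → ℝ) → ℝ)
    (hL : ∀ Q lam, L Q lam = err Q + ∑ k, lam k * (gam Q k - c k))
    (Δ : Set (H → ℝ)) (hΔ : Δ = stdSimplex ℝ H)
    (Λ : Set (K → ℝ)) (hΛ : Λ = {lam | (∀ k, 0 ≤ lam k) ∧ ∑ k, |lam k| ≤ B})
    (Qh : H → ℝ) (lamh : K → ℝ) (hQh : Qh ∈ Δ) (hlamh : lamh ∈ Λ)
    (hsaddle1 : ∀ Q ∈ Δ, L Qh lamh ≤ L Q lamh + ν)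
    (hsaddle2 : ∀ lam ∈ Λ, L Qh lam - ν ≤ L Qh lamh)
    (Q : H → ℝ) (hQ : Q ∈ Δ) (hfeas : ∀ k, gam Q k ≤ c k) :
    err Qh ≤ err Q + 2 * ν :=
  empirical_error_bound_general H K err gam c B ν hB L hL Δ Λ hΛ Qh lamh hlamh hsaddle1 hsaddle2 Q
    hQ hfeas
end

section
/- (Empirical fairness violation) Suppose the empirical fairness constraints γ̂(Q) ≤ ĉ are feasible for some Q ∈ Δ, and (Q̂, λ̂) is a ν-approximate saddle point of L(Q,λ) = err̂(Q) + λᵀ(γ̂(Q) − ĉ) over Δ × {λ ∈ ℝ_+^K : ‖λ‖₁ ≤ B}, where err̂ takes values in [0,1]. Then max_k (γ̂_k(Q̂) − ĉ_k) ≤ (1 + 2ν)/B. -/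
/-!
Feasibility of some `Q₀` bounds the value of the saddle point from above: against any
`λ ≥ 0` the penalty term of `Q₀` is nonpositive, so `L(Q̂, λ̂) ≤ L(Q₀, λ̂) + ν ≤ 1 + ν`.
Conversely, the dual player could have put its whole budget on a single violated constraint,
`λ = B eₖ`, which gives `L(Q̂, λ̂) ≥ err̂(Q̂) + B (γ̂ₖ(Q̂) − ĉₖ) − ν ≥ B (γ̂ₖ(Q̂) − ĉₖ) − ν`.
Comparing the two bounds yields `γ̂ₖ(Q̂) − ĉₖ ≤ (1 + 2ν) / B` for every `k`.
-/

open Finset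

section

variable {K : Type*} [Fintype K]

theorem sum_mul_sub_nonpos_of_le {lam g c : K → ℝ} (hlam : ∀ k, 0 ≤ lam k)
    (hgc : ∀ k, g k ≤ c k) : ∑ k, lam k * (g k - c k) ≤ 0 :=
  sum_nonpos fun k _ => mul_nonpos_of_nonneg_of_nonpos (hlam k) (sub_nonpos.2 (hgc k))

variable [DecidableEq K]

theorem sum_single_mul (k₀ : K) (b : ℝ) (v : K → ℝ) :
    ∑ k, (Pi.single k₀ b : K → ℝ) k * v k = b * v k₀ := by
  simp only [← Pi.single_mul_left_apply, Fintype.sum_pi_single']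

theorem single_mem_nonneg_l1Ball {B : ℝ} (hB : 0 ≤ B) (k₀ : K) :
    (Pi.single k₀ B : K → ℝ) ∈ {lam : K → ℝ | (∀ k, 0 ≤ lam k) ∧ ∑ k, |lam k| ≤ B} := by
  refine ⟨(Pi.single_nonneg (α := fun _ => ℝ)).2 hB, le_of_eq ?_⟩
  simp only [Pi.apply_single (fun _ => abs) (fun _ => abs_zero), Fintype.sum_pi_single',
    abs_of_nonneg hB]

end

theorem empirical_fairness_violation_general
    (H K : Type) [Fintype K] [Nonempty K]
    (err : (H → ℝ) → ℝ) (gam : (H → ℝ) → K → ℝ) (c : K → ℝ)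
    (B ν : ℝ) (hB : 0 < B)
    (L : (H → ℝ) → (K → ℝ) → ℝ)
    (hL : ∀ Q lam, L Q lam = err Q + ∑ k, lam k * (gam Q k - c k))
    (Δ : Set (H → ℝ))
    (Λ : Set (K → ℝ)) (hΛ : Λ = {lam | (∀ k, 0 ≤ lam k) ∧ ∑ k, |lam k| ≤ B})
    (herr01 : ∀ Q ∈ Δ, err Q ∈ Set.Icc (0 : ℝ) 1)
    (hfeas : ∃ Q ∈ Δ, ∀ k, gam Q k ≤ c k)
    (Qh : H → ℝ) (lamh : K → ℝ) (hQh : Qh ∈ Δ) (hlamh : lamh ∈ Λ)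
    (hsaddle1 : ∀ Q ∈ Δ, L Qh lamh ≤ L Q lamh + ν)
    (hsaddle2 : ∀ lam ∈ Λ, L Qh lam - ν ≤ L Qh lamh) :
    (⨆ k : K, (gam Qh k - c k)) ≤ (1 + 2 * ν) / B := by
  classical
  obtain ⟨Q₀, hQ₀, hQ₀c⟩ := hfeas
  subst hΛ
  have hupper : L Qh lamh ≤ 1 + ν :=
    calc L Qh lamh ≤ L Q₀ lamh + ν := hsaddle1 Q₀ hQ₀
      _ ≤ err Q₀ + ν := by
        rw [hL]
        linarith [sum_mul_sub_nonpos_of_le hlamh.1 hQ₀c]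
      _ ≤ 1 + ν := by linarith [(herr01 Q₀ hQ₀).2]
  refine ciSup_le fun k => (le_div_iff₀ hB).2 ?_
  have hlower := hsaddle2 _ (single_mem_nonneg_l1Ball hB.le k)
  rw [hL, sum_single_mul] at hlower
  linarith [(herr01 Qh hQh).1]

/-- empirical fairness violation: if the empirical fairness
constraints are feasible and `(Q̂, λ̂)` is a ν-approximate saddle point of the
Lagrangian, with `err̂` valued in `[0,1]`, then
`max_k (γ̂_k(Q̂) − ĉ_k) ≤ (1 + 2ν)/B`. -/
theorem empirical_fairness_violation
    (H K : Type) [Fintype H] [Fintype K] [Nonempty K]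
    (err : (H → ℝ) → ℝ) (gam : (H → ℝ) → K → ℝ) (c : K → ℝ)
    (B ν : ℝ) (hB : 0 < B) (hν : 0 ≤ ν)
    (L : (H → ℝ) → (K → ℝ) → ℝ)
    (hL : ∀ Q lam, L Q lam = err Q + ∑ k, lam k * (gam Q k - c k))
    (Δ : Set (H → ℝ)) (hΔ : Δ = stdSimplex ℝ H)
    (Λ : Set (K → ℝ)) (hΛ : Λ = {lam | (∀ k, 0 ≤ lam k) ∧ ∑ k, |lam k| ≤ B})
    (herr01 : ∀ Q ∈ Δ, err Q ∈ Set.Icc (0 : ℝ) 1)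
    (hfeas : ∃ Q ∈ Δ, ∀ k, gam Q k ≤ c k)
    (Qh : H → ℝ) (lamh : K → ℝ) (hQh : Qh ∈ Δ) (hlamh : lamh ∈ Λ)
    (hsaddle1 : ∀ Q ∈ Δ, L Qh lamh ≤ L Q lamh + ν)
    (hsaddle2 : ∀ lam ∈ Λ, L Qh lam - ν ≤ L Qh lamh) :
    (⨆ k : K, (gam Qh k - c k)) ≤ (1 + 2 * ν) / B :=
  empirical_fairness_violation_general H K err gam c B ν hB L hL Δ Λ hΛ herr01 hfeas Qh lamh hQh
    hlamh hsaddle1 hsaddle2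
end

section
/- (Costs reproduce the Lagrangian for deterministic classifiers) Over an empirical sample {(Xᵢ,Aᵢ,Yᵢ)}ᵢ₌₁ⁿ, define p_j = (1/n)|{i : (Xᵢ,Aᵢ,Yᵢ) ∈ E_j}| > 0, μ̂_j(h) = average of g_j(Xᵢ,Aᵢ,Yᵢ,h(Xᵢ)) over i with (Xᵢ,Aᵢ,Yᵢ) ∈ E_j, and err̂(h) = (1/n)Σᵢ 1{h(Xᵢ) ≠ Yᵢ}. Let Cᵢ^ŷ = 1{Yᵢ ≠ ŷ} + Σ_{k,j} (M_{k,j} λ_k / p_j) g_j(Xᵢ,Aᵢ,Yᵢ,ŷ)·1{(Xᵢ,Aᵢ,Yᵢ) ∈ E_j} for ŷ ∈ {0,1}. Then for every classifier h, (1/n)Σᵢ [h(Xᵢ)Cᵢ¹ + (1−h(Xᵢ))Cᵢ⁰] = err̂(h) + Σ_{k,j} M_{k,j} λ_k μ̂_j(h) = L(h,λ) + λᵀĉ. Consequently any minimizer of the cost-sensitive objective over h ∈ H minimizes L(·,λ) over H. -/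
/-!
Choosing `C i true` or `C i false` according to `h (Xs i)` charges each sample point the cost
`C i (h (Xs i))`. Its error part averages to `err̂ h`; in its constraint part the weight `1 / p j`
turns the average over all `n` points of the terms supported on `E j` into the average over the
points of `E j`, which is `μ̂ j h`. Hence the cost-sensitive objective is `L(·, λ)` shifted by the
constant `λᵀĉ`, and both have the same minimizers.
-/

open Finset

theorem ite_mul_add_one_sub_ite_mul (b : Bool) (c : Bool → ℝ) :
    (if b then (1 : ℝ) else 0) * c true + (1 - if b then (1 : ℝ) else 0) * c false = c b := by
  cases b <;> simp

theorem sum_div_frequency_mul_indicator {ι : Type*} (s : Finset ι) (P : ι → Prop)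
    [DecidablePred P] (f : ι → ℝ) (c : ℝ) :
    (∑ i ∈ s, c / ((#(s.filter P) : ℝ) / #s) * f i * (if P i then 1 else 0)) / #s =
      c * ((∑ i ∈ s.filter P, f i) / #(s.filter P)) := by
  rcases s.eq_empty_or_nonempty with rfl | hs
  · simp
  simp only [mul_ite, mul_one, mul_zero, ← mul_sum, ← sum_filter]
  have : (#s : ℝ) ≠ 0 := by exact_mod_cast hs.card_pos.ne'
  rw [div_div_eq_mul_div]
  field_simp

theorem sum_mul_sub_add_sum_mul {K J : Type*} [Fintype K] [Fintype J] (M : K → J → ℝ)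
    (l c : K → ℝ) (μ : J → ℝ) :
    ∑ k, l k * ((∑ j, M k j * μ j) - c k) + ∑ k, l k * c k = ∑ k, ∑ j, M k j * l k * μ j := by
  simp only [mul_sub, sum_sub_distrib, mul_sum, sub_add_cancel]
  exact sum_congr rfl fun k _ => sum_congr rfl fun j _ => by ring

theorem costs_reproduce_lagrangian_general
    (𝒳 𝒜 K J : Type) [Fintype K] [Fintype J]
    (n : ℕ)
    (Xs : Fin n → 𝒳) (As : Fin n → 𝒜) (Ys : Fin n → Bool)
    (E : J → Set (𝒳 × 𝒜 × Bool)) [∀ j, DecidablePred (· ∈ E j)]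
    (g : J → 𝒳 → 𝒜 → Bool → Bool → ℝ)
    (M : K → J → ℝ) (lam : K → ℝ) (chat : K → ℝ)
    (p : J → ℝ)
    (hp : ∀ j, p j = ((univ.filter fun i => (Xs i, As i, Ys i) ∈ E j).card : ℝ) / n)
    (muhat : J → (𝒳 → Bool) → ℝ)
    (hmuhat : ∀ j h, muhat j h =
      (∑ i ∈ univ.filter fun i => (Xs i, As i, Ys i) ∈ E j,
          g j (Xs i) (As i) (Ys i) (h (Xs i))) /
        ((univ.filter fun i => (Xs i, As i, Ys i) ∈ E j).card : ℝ))
    (errhat : (𝒳 → Bool) → ℝ)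
    (herrhat : ∀ h, errhat h = (∑ i, if h (Xs i) ≠ Ys i then (1 : ℝ) else 0) / n)
    (C : Fin n → Bool → ℝ)
    (hC : ∀ i yh, C i yh = (if Ys i ≠ yh then (1 : ℝ) else 0) +
      ∑ k, ∑ j, (M k j * lam k / p j) * g j (Xs i) (As i) (Ys i) yh *
        (if (Xs i, As i, Ys i) ∈ E j then 1 else 0))
    (cost : (𝒳 → Bool) → ℝ)
    (hcost : ∀ h, cost h = (∑ i, ((if h (Xs i) then (1 : ℝ) else 0) * C i true +
      (1 - if h (Xs i) then (1 : ℝ) else 0) * C i false)) / n)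
    (L : (𝒳 → Bool) → (K → ℝ) → ℝ)
    (hLdef : ∀ h l, L h l = errhat h + ∑ k, l k * ((∑ j, M k j * muhat j h) - chat k))
    (H : Set (𝒳 → Bool)) :
    (∀ h, cost h = errhat h + ∑ k, ∑ j, M k j * lam k * muhat j h) ∧
      (∀ h, cost h = L h lam + ∑ k, lam k * chat k) ∧
      (∀ h0 ∈ H, (∀ h ∈ H, cost h0 ≤ cost h) → ∀ h ∈ H, L h0 lam ≤ L h lam) := by
  have card_univ_fin : (n : ℝ) = #(univ : Finset (Fin n)) := by simp
  have cost_eq : ∀ h, cost h = errhat h + ∑ k, ∑ j, M k j * lam k * muhat j h := by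
    intro h
    rw [hcost, herrhat]
    simp only [ite_mul_add_one_sub_ite_mul]
    simp only [hC, sum_add_distrib, add_div, ne_comm (a := Ys _)]
    congr 1
    rw [sum_comm, sum_div]
    refine sum_congr rfl fun k _ => ?_
    rw [sum_comm, sum_div]
    refine sum_congr rfl fun j _ => ?_
    rw [hp, hmuhat, card_univ_fin, sum_div_frequency_mul_indicator]
  have cost_eq_lagrangian : ∀ h, cost h = L h lam + ∑ k, lam k * chat k := fun h => by
    rw [cost_eq, hLdef, add_assoc, sum_mul_sub_add_sum_mul]
  refine ⟨cost_eq, cost_eq_lagrangian, fun h0 _ hmin h hH => ?_⟩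
  have hle := hmin h hH
  rw [cost_eq_lagrangian, cost_eq_lagrangian] at hle
  linarith

/-- costs reproduce the Lagrangian for deterministic
classifiers: the cost-sensitive costs `Cᵢ^ŷ` built from the Lagrange
multipliers satisfy
`(1/n) ∑ᵢ [h(Xᵢ)Cᵢ¹ + (1−h(Xᵢ))Cᵢ⁰] = err̂(h) + ∑_{k,j} M_{k,j} λ_k μ̂_j(h)
 = L(h,λ) + λᵀĉ`, so any minimizer of the cost-sensitive objective over `H`
minimizes `L(·,λ)` over `H`. -/
theorem costs_reproduce_lagrangian
    (𝒳 𝒜 K J : Type) [Fintype K] [Fintype J]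
    (n : ℕ) (hn : 0 < n)
    (Xs : Fin n → 𝒳) (As : Fin n → 𝒜) (Ys : Fin n → Bool)
    (E : J → Set (𝒳 × 𝒜 × Bool)) [∀ j, DecidablePred (· ∈ E j)]
    (g : J → 𝒳 → 𝒜 → Bool → Bool → ℝ)
    (hg01 : ∀ j x a y yh, g j x a y yh ∈ Set.Icc (0 : ℝ) 1)
    (M : K → J → ℝ) (lam : K → ℝ) (hlam : ∀ k, 0 ≤ lam k) (chat : K → ℝ)
    (p : J → ℝ)
    (hp : ∀ j, p j = ((univ.filter fun i => (Xs i, As i, Ys i) ∈ E j).card : ℝ) / n)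
    (hppos : ∀ j, 0 < p j)
    (muhat : J → (𝒳 → Bool) → ℝ)
    (hmuhat : ∀ j h, muhat j h =
      (∑ i ∈ univ.filter fun i => (Xs i, As i, Ys i) ∈ E j,
          g j (Xs i) (As i) (Ys i) (h (Xs i))) /
        ((univ.filter fun i => (Xs i, As i, Ys i) ∈ E j).card : ℝ))
    (errhat : (𝒳 → Bool) → ℝ)
    (herrhat : ∀ h, errhat h = (∑ i, if h (Xs i) ≠ Ys i then (1 : ℝ) else 0) / n)
    (C : Fin n → Bool → ℝ)
    (hC : ∀ i yh, C i yh = (if Ys i ≠ yh then (1 : ℝ) else 0) +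
      ∑ k, ∑ j, (M k j * lam k / p j) * g j (Xs i) (As i) (Ys i) yh *
        (if (Xs i, As i, Ys i) ∈ E j then 1 else 0))
    (cost : (𝒳 → Bool) → ℝ)
    (hcost : ∀ h, cost h = (∑ i, ((if h (Xs i) then (1 : ℝ) else 0) * C i true +
      (1 - if h (Xs i) then (1 : ℝ) else 0) * C i false)) / n)
    (L : (𝒳 → Bool) → (K → ℝ) → ℝ)
    (hLdef : ∀ h l, L h l = errhat h + ∑ k, l k * ((∑ j, M k j * muhat j h) - chat k))
    (H : Set (𝒳 → Bool)) :
    (∀ h, cost h = errhat h + ∑ k, ∑ j, M k j * lam k * muhat j h) ∧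
      (∀ h, cost h = L h lam + ∑ k, lam k * chat k) ∧
      (∀ h0 ∈ H, (∀ h ∈ H, cost h0 ≤ cost h) → ∀ h ∈ H, L h0 lam ≤ L h lam) :=
  costs_reproduce_lagrangian_general 𝒳 𝒜 K J n Xs As Ys E g M lam chat p hp muhat hmuhat errhat
    herrhat C hC cost hcost L hLdef H
end
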